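/- arXiv:2602.21023 — 6 statements merged into one kernel-verified Lean document; each statement's English description precedes it below -/
import Mathlib

section
/- Let (S, ρ) be a Robinson space on S = {1,…,n} with the identity order compatible. Then the rows of the matrix of centers are monotone: for each fixed i and all j ≤ j', the (i,j) entry of the matrix of centers is at most the (i,j') entry, where the (i,j) entry equals LC(i,j) if i < j, equals i if i = j, and equals RC(i,j) if i > j. -/
/-- In a strict Robinson space with identity compatible order, the rows of the
matrix of centers are monotone: for fixed i and j ≤ j', C i j ≤ C i j'. -/
theorem stmt_4 {n : ℕ} (ρ : Fin n → Fin n → ℝ)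
    (hsymm : ∀ x y, ρ x y = ρ y x)
    (hnonneg : ∀ x y, 0 ≤ ρ x y)
    (hzero : ∀ x y, ρ x y = 0 ↔ x = y)
    (hstrict : ∀ x y u v : Fin n, x ≠ y → u ≠ v →
      ¬(x = u ∧ y = v) → ¬(x = v ∧ y = u) → ρ x y ≠ ρ u v)
    (hrob : ∀ x y z : Fin n, x < y → y < z → max (ρ x y) (ρ y z) ≤ ρ x z)
    (C : Fin n → Fin n → Fin n)
    (hdiag : ∀ i, C i i = i)
    -- for i < j, C i j = LC(i,j) = max{k ∈ [i,j] : ρ(i,k) < ρ(k,j)}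
    (hLC : ∀ i j : Fin n, i < j →
      i ≤ C i j ∧ C i j ≤ j ∧ ρ i (C i j) < ρ (C i j) j ∧
      ∀ k : Fin n, i ≤ k → k ≤ j → ρ i k < ρ k j → k ≤ C i j)
    -- for j < i, C i j = RC(i,j) = min{k ∈ [j,i] : ρ(j,k) > ρ(k,i)}
    (hRC : ∀ i j : Fin n, j < i →
      j ≤ C i j ∧ C i j ≤ i ∧ ρ (C i j) i < ρ j (C i j) ∧
      ∀ k : Fin n, j ≤ k → k ≤ i → ρ k i < ρ j k → C i j ≤ k) :
    ∀ i j j' : Fin n, j ≤ j' → C i j ≤ C i j' := by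
  intro i j j' hjj'
  rcases eq_or_lt_of_le hjj' with rfl | hlt
  · exact le_refl _
  rcases lt_trichotomy j i with h1 | h1 | h1
  · -- j < i
    rcases lt_trichotomy j' i with h2 | h2 | h2
    · -- j' < i : both RC
      obtain ⟨hc1, hc2, hc3, _⟩ := hRC i j' h2
      obtain ⟨_, _, _, hmin⟩ := hRC i j h1
      have hj'c : j' < C i j' := by
        rcases eq_or_lt_of_le hc1 with heq | h
        · exfalso
          have h0 : ρ j' (C i j') = 0 := by rw [← heq]; exact (hzero j' j').mpr rfl
          rw [h0] at hc3
          linarith [hnonneg (C i j') i]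
        · exact h
      have hle : ρ j' (C i j') ≤ ρ j (C i j') :=
        le_trans (le_max_right _ _) (hrob j j' (C i j') hlt hj'c)
      exact hmin (C i j') (le_trans hjj' hc1) hc2 (lt_of_lt_of_le hc3 hle)
    · -- j' = i
      subst h2
      rw [hdiag]
      exact (hRC j' j h1).2.1
    · -- i < j'
      exact le_trans ((hRC i j h1).2.1) ((hLC i j' h2).1)
  · -- j = i
    subst h1
    rw [hdiag]
    exact (hLC j j' hlt).1
  · -- i < j : both LC
    obtain ⟨hc1, hc2, hc3, _⟩ := hLC i j h1
    have hcj : C i j < j := by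
      rcases eq_or_lt_of_le hc2 with heq | h
      · exfalso
        have h0 : ρ (C i j) j = 0 := by rw [heq]; exact (hzero j j).mpr rfl
        rw [h0] at hc3
        linarith [hnonneg i (C i j)]
      · exact h
    have hle : ρ (C i j) j ≤ ρ (C i j) j' :=
      le_trans (le_max_left _ _) (hrob (C i j) j j' hcj hlt)
    exact (hLC i j' (h1.trans hlt)).2.2.2 (C i j) hc1 (le_trans hc2 hjj')
      (lt_of_lt_of_le hc3 hle)
end

section
/- Let (S, ρ) be a Robinson space with compatible order <, and let (S, ρ̂) be its strict mapping, where ρ̂ assigns to each unordered pair {i,j} (i < j) its rank under the total order π on pairs defined lexicographically by: increasing ρ(i,j), then decreasing i, then increasing j. Then the order < is also compatible for (S, ρ̂): for all i < j < k, ρ̂(i,k) > max{ρ̂(i,j), ρ̂(j,k)}. -/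
/-- The compatible order of a Robinson space is also compatible for its strict
mapping: for i < j < k, ρ̂(i,k) > max{ρ̂(i,j), ρ̂(j,k)}, where ρ̂ ranks pairs
by increasing ρ, then decreasing first index, then increasing second index. -/
theorem stmt_5 {n : ℕ} (ρ : Fin n → Fin n → ℝ)
    (hsymm : ∀ x y, ρ x y = ρ y x)
    (hnonneg : ∀ x y, 0 ≤ ρ x y)
    (hzero : ∀ x y, ρ x y = 0 ↔ x = y)
    (hrob : ∀ x y z : Fin n, x < y → y < z → max (ρ x y) (ρ y z) ≤ ρ x z)
    (ρhat : Fin n → Fin n → ℝ)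
    (hhatdiag : ∀ i, ρhat i i = 0)
    (hhatsymm : ∀ i j, ρhat i j = ρhat j i)
    (hhatpos : ∀ i j : Fin n, i < j → 0 < ρhat i j)
    -- ρhat realizes the rank of pairs under the lexicographic order π
    (hhatorder : ∀ i j i' j' : Fin n, i < j → i' < j' →
      (ρhat i j < ρhat i' j' ↔
        (ρ i j < ρ i' j' ∨ (ρ i j = ρ i' j' ∧ (i' < i ∨ (i = i' ∧ j < j')))))) :
    ∀ i j k : Fin n, i < j → j < k →
      max (ρhat i j) (ρhat j k) < ρhat i k := by
  intro i j k hij hjk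
  have hik := hij.trans hjk
  have hr := hrob i j k hij hjk
  have h1 : ρhat i j < ρhat i k := by
    rw [hhatorder i j i k hij hik]
    rcases lt_or_eq_of_le (le_trans (le_max_left _ _) hr) with h | h
    · exact Or.inl h
    · exact Or.inr ⟨h, Or.inr ⟨rfl, hjk⟩⟩
  have h2 : ρhat j k < ρhat i k := by
    rw [hhatorder j k i k hjk hik]
    rcases lt_or_eq_of_le (le_trans (le_max_right _ _) hr) with h | h
    · exact Or.inl h
    · exact Or.inr ⟨h, Or.inl hij⟩
  exact max_lt h1 h2
end

section
/- Let (S, ρ) be a strict Robinson space on {1,…,n} (n ≥ 4) with the identity order compatible, and let I be a valid drawing of S into a metric space (X,d) whose metric satisfies the four-point condition. Then for any 1 ≤ a < b < c < e ≤ n, writing d(x,y) for d(I(x),I(y)): d(a,b) + d(c,e) < d(a,c) + d(b,e) = d(a,e) + d(b,c). -/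
/-- For a valid drawing of a strict Robinson space (n ≥ 4) into a metric space
satisfying the four-point condition, every ordered quadruple a < b < c < e
satisfies d(a,b)+d(c,e) < d(a,c)+d(b,e) = d(a,e)+d(b,c). -/
theorem stmt_7 {n : ℕ} (hn : 4 ≤ n) (ρ : Fin n → Fin n → ℝ)
    (hsymm : ∀ x y, ρ x y = ρ y x)
    (hnonneg : ∀ x y, 0 ≤ ρ x y)
    (hzero : ∀ x y, ρ x y = 0 ↔ x = y)
    (hstrict : ∀ x y u v : Fin n, x ≠ y → u ≠ v →
      ¬(x = u ∧ y = v) → ¬(x = v ∧ y = u) → ρ x y ≠ ρ u v)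
    (hrob : ∀ x y z : Fin n, x < y → y < z → max (ρ x y) (ρ y z) ≤ ρ x z)
    {X : Type*} [MetricSpace X]
    (hfpc : ∀ p q u v : X,
      dist p q + dist u v ≤ max (dist p u + dist q v) (dist p v + dist q u))
    (I : Fin n → X) (hinj : Function.Injective I)
    (hvalid : ∀ x y z : Fin n, ρ x y < ρ x z →
      dist (I x) (I y) < dist (I x) (I z)) :
    ∀ a b c e : Fin n, a < b → b < c → c < e →
      dist (I a) (I b) + dist (I c) (I e) <
        dist (I a) (I c) + dist (I b) (I e) ∧
      dist (I a) (I c) + dist (I b) (I e) =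
        dist (I a) (I e) + dist (I b) (I c) := by
  intro a b c e hab hbc hce
  have hac : a < c := hab.trans hbc
  have hbe : b < e := hbc.trans hce
  have r1 : ρ a b < ρ a c :=
    lt_of_le_of_ne ((le_max_left _ _).trans (hrob a b c hab hbc))
      (hstrict a b a c hab.ne hac.ne (fun h => hbc.ne h.2) (fun h => hac.ne h.1))
  have r2 : ρ c e < ρ b e :=
    lt_of_le_of_ne ((le_max_right _ _).trans (hrob b c e hbc hce))
      (hstrict c e b e hce.ne hbe.ne (fun h => hbc.ne' h.1) (fun h => hce.ne h.1))
  have d1 : dist (I a) (I b) < dist (I a) (I c) := hvalid a b c r1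
  have d2 : dist (I c) (I e) < dist (I b) (I e) := by
    have h := hvalid e c b (by rw [hsymm e c, hsymm e b]; exact r2)
    rwa [dist_comm (I e) (I c), dist_comm (I e) (I b)] at h
  have hX : dist (I a) (I b) + dist (I c) (I e) < dist (I a) (I c) + dist (I b) (I e) :=
    add_lt_add d1 d2
  have f1 := hfpc (I a) (I c) (I b) (I e)
  have hS12 : dist (I a) (I c) + dist (I b) (I e) ≤ dist (I a) (I e) + dist (I b) (I c) := by
    rcases le_max_iff.mp f1 with h | h
    · linarith
    · rw [dist_comm (I c) (I b)] at h; exact h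
  have f2 := hfpc (I a) (I e) (I b) (I c)
  have hS21 : dist (I a) (I e) + dist (I b) (I c) ≤ dist (I a) (I c) + dist (I b) (I e) := by
    rcases le_max_iff.mp f2 with h | h
    · rw [dist_comm (I e) (I c)] at h; linarith
    · rw [dist_comm (I e) (I b)] at h; exact h
  exact ⟨hX, le_antisymm hS12 hS21⟩
end

section
/- Let (X, d) be a finite metric space satisfying the Strong four-point condition with respect to an ordering π, i.e., d satisfies the four-point condition and for all i ≤π j ≤π k ≤π l: d(i,j) + d(k,l) ≤ d(i,k) + d(j,l) = d(i,l) + d(j,k). Then there exist functions h, l from X to ℝ with h monotone with respect to π and l ≥ 0, such that d(x,y) = |h(y) − h(x)| + l(x) + l(y) for all x ≠ y. In other words, (X,d) embeds isometrically into a caterpillar. -/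
/-- A finite metric space satisfying the Strong four-point condition with
respect to an ordering embeds isometrically into a caterpillar: there are
spine positions h (monotone) and leg lengths l ≥ 0 realizing all distances. -/
theorem stmt_11 {X : Type*} [Fintype X] [LinearOrder X] [MetricSpace X]
    (hfpc : ∀ x y u v : X,
      dist x y + dist u v ≤ max (dist x u + dist y v) (dist x v + dist y u))
    (hsfpc : ∀ i j k l : X, i ≤ j → j ≤ k → k ≤ l →
      dist i j + dist k l ≤ dist i k + dist j l ∧
      dist i k + dist j l = dist i l + dist j k) :
    ∃ h leg : X → ℝ, Monotone h ∧ (∀ x, 0 ≤ leg x) ∧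
      ∀ x y : X, x ≠ y → dist x y = |h y - h x| + leg x + leg y := by
  rcases isEmpty_or_nonempty X with hE | hN
  · exact ⟨fun _ => 0, fun _ => 0, monotone_const, fun x => le_refl 0,
      fun x => isEmptyElim x⟩
  · have hne : (Finset.univ : Finset X).Nonempty := Finset.univ_nonempty
    set a := Finset.univ.min' hne with ha_def
    set b := Finset.univ.max' hne with hb_def
    have ha : ∀ x : X, a ≤ x := fun x => Finset.min'_le _ x (Finset.mem_univ x)
    have hb : ∀ x : X, x ≤ b := fun x => Finset.le_max' _ x (Finset.mem_univ x)
    refine ⟨fun x => (dist a x - dist x b) / 2,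
      fun x => (dist a x + dist x b - dist a b) / 2, ?_, ?_, ?_⟩
    · intro x y hxy
      have h1 := (hsfpc a x y b (ha x) hxy (hb y)).1
      simp only
      linarith
    · intro x
      have := dist_triangle a x b
      simp only
      linarith
    · intro x y hxy
      rcases lt_or_gt_of_ne hxy with h | h
      · obtain ⟨h1, h2⟩ := hsfpc a x y b (ha x) h.le (hb y)
        have habs : |(dist a y - dist y b) / 2 - (dist a x - dist x b) / 2|
            = (dist a y - dist y b) / 2 - (dist a x - dist x b) / 2 :=
          abs_of_nonneg (by linarith)
        simp only [habs]
        linarith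
      · obtain ⟨h1, h2⟩ := hsfpc a y x b (ha y) h.le (hb x)
        have hc : dist x y = dist y x := dist_comm x y
        have habs : |(dist a y - dist y b) / 2 - (dist a x - dist x b) / 2|
            = (dist a x - dist x b) / 2 - (dist a y - dist y b) / 2 := by
          rw [abs_of_nonpos (by linarith)]; ring
        simp only [habs]
        linarith
end

section
/- (Gordan's theorem of the alternative) Let A be an m × n real matrix. Then exactly one of the following holds: (1) there exists x ∈ ℝⁿ with Ax > 0 (all entries strictly positive); (2) there exists a nonzero y ∈ ℝᵐ with y ≥ 0 and Aᵀy = 0. -/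
/-!
Either the origin lies in the convex hull of the rows of `A`, and the barycentric weights give
`y`, or a linear functional separates it strictly from that hull, and the vector representing the
functional is `x`. Both cannot happen, since then `0 = (Aᵀ y) ⬝ x = y ⬝ (A x) > 0`.
-/

open Set

namespace Matrix

variable {ι κ : Type*}

lemma dotProduct_pos_of_nonneg_of_ne_zero {R : Type*} [Semiring R] [PartialOrder R]
    [IsStrictOrderedRing R] [Fintype ι] {v w : ι → R} (hv : 0 ≤ v) (hv0 : v ≠ 0)
    (hw : ∀ i, 0 < w i) : 0 < v ⬝ᵥ w := by
  obtain ⟨i, hi⟩ := Function.ne_iff.mp hv0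
  exact Finset.sum_pos' (fun j _ => mul_nonneg (hv j) (hw j).le)
    ⟨i, Finset.mem_univ i, mul_pos ((hv i).lt_of_ne' hi) (hw i)⟩

lemma not_forall_pos_mulVec {R : Type*} [CommRing R] [PartialOrder R] [IsStrictOrderedRing R]
    [Fintype ι] [Fintype κ] (A : Matrix ι κ R) {y : ι → R} (hy : 0 ≤ y) (hy0 : y ≠ 0)
    (hAy : Aᵀ *ᵥ y = 0) (x : κ → R) : ¬ ∀ i, 0 < (A *ᵥ x) i := fun hx => by
  have h := dotProduct_pos_of_nonneg_of_ne_zero hy hy0 hx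
  rw [dotProduct_mulVec, ← mulVec_transpose, hAy, zero_dotProduct] at h
  exact h.false

lemma convexHull_range_eq_image_stdSimplex {R : Type*} [Field R] [LinearOrder R]
    [IsStrictOrderedRing R] [Fintype ι] (A : Matrix ι κ R) :
    convexHull R (range A) = (Aᵀ *ᵥ ·) '' stdSimplex R ι := by
  classical
  have hrows : range A = A.vecMulLinear '' range fun i => Pi.single i 1 := by
    rw [← range_comp]
    congr 1
    ext i : 1
    simp [row]
  simp_rw [mulVec_transpose]
  rw [hrows, ← LinearMap.image_convexHull, convexHull_rangle_single_eq_stdSimplex]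
  rfl

lemma exists_transpose_mulVec_eq_zero_of_zero_mem_convexHull {R : Type*} [Field R]
    [LinearOrder R] [IsStrictOrderedRing R] [Fintype ι] {A : Matrix ι κ R}
    (h : 0 ∈ convexHull R (range A)) : ∃ y : ι → R, y ≠ 0 ∧ 0 ≤ y ∧ Aᵀ *ᵥ y = 0 := by
  rw [convexHull_range_eq_image_stdSimplex] at h
  obtain ⟨y, ⟨hy, hsum⟩, hAy⟩ := h
  refine ⟨y, ?_, hy, hAy⟩
  rintro rfl
  simp at hsum

lemma exists_forall_pos_mulVec_of_zero_notMem_convexHull [Finite ι] [Fintype κ]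
    {A : Matrix ι κ ℝ} (h : 0 ∉ convexHull ℝ (range A)) :
    ∃ x : κ → ℝ, ∀ i, 0 < (A *ᵥ x) i := by
  classical
  obtain ⟨f, u, hf0, hfA⟩ := geometric_hahn_banach_point_closed (convex_convexHull ℝ _)
    ((finite_range A).isClosed_convexHull ℝ) h
  refine ⟨fun j => f (Pi.single j 1), fun i => ?_⟩
  have hfAi : (A *ᵥ fun j => f (Pi.single j 1)) i = f (A i) := by
    conv_rhs => rw [pi_eq_sum_univ' (A i)]
    simp [mulVec, dotProduct]
  rw [hfAi]
  linarith [map_zero f, hfA (A i) (subset_convexHull ℝ _ (mem_range_self i))]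

end Matrix

/-- Gordan's theorem of the alternative: for an m × n real matrix A, exactly
one of the following holds: (1) ∃ x with Ax entrywise strictly positive;
(2) ∃ nonzero y ≥ 0 with Aᵀy = 0. -/
theorem stmt_13 {m n : ℕ} (A : Matrix (Fin m) (Fin n) ℝ) :
    Xor' (∃ x : Fin n → ℝ, ∀ i, 0 < A.mulVec x i)
      (∃ y : Fin m → ℝ, y ≠ 0 ∧ (∀ i, 0 ≤ y i) ∧ A.transpose.mulVec y = 0) := by
  refine (xor_iff_or_and_not_and _ _).2 ⟨?_, ?_⟩
  · by_cases h : 0 ∈ convexHull ℝ (range A)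
    · exact Or.inr (Matrix.exists_transpose_mulVec_eq_zero_of_zero_mem_convexHull h)
    · exact Or.inl (Matrix.exists_forall_pos_mulVec_of_zero_notMem_convexHull h)
  · rintro ⟨⟨x, hx⟩, y, hy0, hy, hAy⟩
    exact A.not_forall_pos_mulVec hy hy0 hAy x hx
end

section
/- There exists a strict Robinson space on six elements that admits no valid drawing in any caterpillar: concretely, for the specific 6×6 Robinson dissimilarity matrix of the paper with centers such that the reduced constraint matrix Y'_S (given explicitly as a 10×6 integer matrix) admits the nonzero nonnegative vector y = (1,1,1,0,1,0)ᵀ with Y'_S y = (0,1,0,0,0,0,0,0,0,0)ᵀ ≥ 0, the system of strict linear inequalities defining a caterpillar valid drawing is infeasible. -/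
/-- The 6×6 integer Robinson dissimilarity matrix of the paper. -/
def Mrob : Fin 6 → Fin 6 → ℕ :=
  ![![0, 4, 6, 11, 14, 15],
    ![4, 0, 2, 3, 8, 13],
    ![6, 2, 0, 1, 7, 12],
    ![11, 3, 1, 0, 5, 10],
    ![14, 8, 7, 5, 0, 9],
    ![15, 13, 12, 10, 9, 0]]

/-- There exists a strict Robinson space on six elements (with the identity
order compatible) that admits no valid drawing in any caterpillar. -/
theorem stmt_16 :
    ∃ ρ : Fin 6 → Fin 6 → ℝ,
      (∀ x y, ρ x y = ρ y x) ∧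
      (∀ x y, 0 ≤ ρ x y) ∧
      (∀ x y, ρ x y = 0 ↔ x = y) ∧
      (∀ x y u v : Fin 6, x ≠ y → u ≠ v →
        ¬(x = u ∧ y = v) → ¬(x = v ∧ y = u) → ρ x y ≠ ρ u v) ∧
      (∀ x y z : Fin 6, x < y → y < z → max (ρ x y) (ρ y z) ≤ ρ x z) ∧
      ¬ ∃ (h l : Fin 6 → ℝ), Monotone h ∧ (∀ i, 0 ≤ l i) ∧
        (∀ x y z : Fin 6, ρ x y < ρ x z →
          (if x = y then (0 : ℝ) else |h y - h x| + l x + l y) <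
          (if x = z then (0 : ℝ) else |h z - h x| + l x + l z)) := by
  refine ⟨fun x y => (Mrob x y : ℝ), ?_, ?_, ?_, ?_, ?_, ?_⟩
  · intro x y
    have key : ∀ x y, Mrob x y = Mrob y x := by decide
    dsimp only
    exact_mod_cast key x y
  · intro x y; positivity
  · intro x y
    rw [Nat.cast_eq_zero]
    revert x y; decide
  · intro x y u v hxy huv h1 h2
    have : Mrob x y ≠ Mrob u v := by revert hxy huv h1 h2; revert x y u v; decide
    dsimp only
    exact_mod_cast this
  · intro x y z hxy hyz
    have : max (Mrob x y) (Mrob y z) ≤ Mrob x z := by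
      revert hxy hyz; revert x y z; decide
    calc max ((Mrob x y : ℝ)) ((Mrob y z : ℝ)) = ((max (Mrob x y) (Mrob y z) : ℕ) : ℝ) := by
          rw [Nat.cast_max]
      _ ≤ (Mrob x z : ℝ) := by exact_mod_cast this
  · rintro ⟨h, l, hm, hl, hd⟩
    have habs : ∀ i j : Fin 6, i ≤ j → |h i - h j| = h j - h i := fun i j hij => by
      rw [abs_sub_comm]; exact abs_of_nonneg (sub_nonneg.2 (hm hij))
    have habs' : ∀ i j : Fin 6, i ≤ j → |h j - h i| = h j - h i := fun i j hij =>
      abs_of_nonneg (sub_nonneg.2 (hm hij))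
    have cast_lt : ∀ x y z : Fin 6, Mrob x y < Mrob x z →
        ((Mrob x y : ℝ) < (Mrob x z : ℝ)) := fun x y z hh => by exact_mod_cast hh
    have t1 := hd 5 4 3 (cast_lt 5 4 3 (by decide))
    have t2 := hd 2 0 4 (cast_lt 2 0 4 (by decide))
    have t3 := hd 2 3 1 (cast_lt 2 3 1 (by decide))
    have t4 := hd 3 5 0 (cast_lt 3 5 0 (by decide))
    have t5 := hd 4 1 5 (cast_lt 4 1 5 (by decide))
    rw [if_neg (by decide), if_neg (by decide), habs 4 5 (by decide),
      habs 3 5 (by decide)] at t1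
    rw [if_neg (by decide), if_neg (by decide), habs 0 2 (by decide),
      habs' 2 4 (by decide)] at t2
    rw [if_neg (by decide), if_neg (by decide), habs' 2 3 (by decide),
      habs 1 2 (by decide)] at t3
    rw [if_neg (by decide), if_neg (by decide), habs' 3 5 (by decide),
      habs 0 3 (by decide)] at t4
    rw [if_neg (by decide), if_neg (by decide), habs 1 4 (by decide),
      habs' 4 5 (by decide)] at t5
    linarith [t1, t2, t3, t4, t5]
end
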